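/- Let a,b ∈ ℝ with a² - b² ≠ 1 and W ⊂ ℝ⁴ the plane spanned by u₁ = (1,0,0,0) and u₂ = (0,a,b,1). With J₁(x₁,x₂,x₃,x₄) = (x₃,x₄,x₁,x₂) and g₁ = diag(1,1,-1,-1), the tangential endomorphism P of J₁ on W satisfies P² = (b²/(1-a²+b²))·Id on W. -/

import Mathlib

def J1 (v : Fin 4 → ℝ) : Fin 4 → ℝ := ![v 2, v 3, v 0, v 1]

def g1 (v w : Fin 4 → ℝ) : ℝ := v 0 * w 0 + v 1 * w 1 - v 2 * w 2 - v 3 * w 3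

/-! In the basis `u₁, u₂` of `W` the Gram matrix of `g₁` is `diag(1, a² - b² - 1)` and
`J₁(x u₁ + y u₂) = (y b, y, x, y a)` pairs with `u₁, u₂` to `y b, -x b`. Hence the projection `P`
sends `(x, y)` to `(y b, -x b / (a² - b² - 1))`, and applying it twice multiplies both
coordinates by `-b² / (a² - b² - 1)`. -/

namespace TangentPlane

variable (a b : ℝ)

def u₁ : Fin 4 → ℝ := ![1, 0, 0, 0]

def u₂ : Fin 4 → ℝ := ![0, a, b, 1]

lemma g1_sub_left (u v w : Fin 4 → ℝ) : g1 (u - v) w = g1 u w - g1 v w := by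
  simp only [g1, Pi.sub_apply]
  ring

variable {a b}

lemma g1_comb_u₁ (c d : ℝ) : g1 (c • u₁ + d • u₂ a b) u₁ = c := by
  simp [g1, u₁, u₂]

lemma g1_comb_u₂ (c d : ℝ) : g1 (c • u₁ + d • u₂ a b) (u₂ a b) = d * (a ^ 2 - b ^ 2 - 1) := by
  simp only [g1, u₁, u₂, Matrix.smul_cons, smul_eq_mul, mul_one, mul_zero, Matrix.smul_empty,
    Pi.add_apply, Matrix.cons_val_zero, add_zero, Matrix.cons_val_one, zero_add, Matrix.cons_val]
  ring

lemma g1_J1_comb_u₁ (x y : ℝ) : g1 (J1 (x • u₁ + y • u₂ a b)) u₁ = y * b := by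
  simp [g1, J1, u₁, u₂]

lemma g1_J1_comb_u₂ (x y : ℝ) : g1 (J1 (x • u₁ + y • u₂ a b)) (u₂ a b) = -(x * b) := by
  simp [g1, J1, u₁, u₂]

lemma tangential_apply (hab : a ^ 2 - b ^ 2 ≠ 1) (P : (Fin 4 → ℝ) → (Fin 4 → ℝ))
    (hPW : ∀ u ∈ Submodule.span ℝ {u₁, u₂ a b}, P u ∈ Submodule.span ℝ {u₁, u₂ a b})
    (horth : ∀ u ∈ Submodule.span ℝ {u₁, u₂ a b}, ∀ w ∈ Submodule.span ℝ {u₁, u₂ a b},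
      g1 (J1 u - P u) w = 0)
    (x y : ℝ) :
    P (x • u₁ + y • u₂ a b) = (y * b) • u₁ + (-(x * b) / (a ^ 2 - b ^ 2 - 1)) • u₂ a b := by
  have hD : a ^ 2 - b ^ 2 - 1 ≠ 0 := sub_ne_zero.mpr hab
  have hv : x • u₁ + y • u₂ a b ∈ Submodule.span ℝ {u₁, u₂ a b} :=
    Submodule.mem_span_pair.mpr ⟨x, y, rfl⟩
  obtain ⟨c, d, hcd⟩ := Submodule.mem_span_pair.mp (hPW _ hv)
  have h₁ := horth _ hv u₁ (Submodule.subset_span (by simp))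
  have h₂ := horth _ hv (u₂ a b) (Submodule.subset_span (by simp))
  rw [← hcd, g1_sub_left, g1_J1_comb_u₁, g1_comb_u₁, sub_eq_zero] at h₁
  rw [← hcd, g1_sub_left, g1_J1_comb_u₂, g1_comb_u₂, sub_eq_zero] at h₂
  rw [← hcd, ← h₁, h₂, mul_div_cancel_right₀ d hD]

end TangentPlane

open TangentPlane in
theorem stmt_16 (a b : ℝ) (hab : a ^ 2 - b ^ 2 ≠ 1) (W : Submodule ℝ (Fin 4 → ℝ))
    (hW : W = Submodule.span ℝ {![1, 0, 0, 0], ![0, a, b, 1]})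
    (P : (Fin 4 → ℝ) → (Fin 4 → ℝ))
    (hPW : ∀ u ∈ W, P u ∈ W)
    (horth : ∀ u ∈ W, ∀ w ∈ W, g1 (J1 u - P u) w = 0) :
    ∀ u ∈ W, P (P u) = (b ^ 2 / (1 - a ^ 2 + b ^ 2)) • u := by
  subst hW
  have hP := tangential_apply hab P hPW horth
  intro u hu
  obtain ⟨x, y, rfl⟩ := Submodule.mem_span_pair.mp hu
  change P (P (x • u₁ + y • u₂ a b)) = _ • (x • u₁ + y • u₂ a b)
  have hD : a ^ 2 - b ^ 2 - 1 ≠ 0 := sub_ne_zero.mpr hab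
  have hD' : 1 - a ^ 2 + b ^ 2 ≠ 0 := fun h => hab (by linarith)
  rw [hP, hP, smul_add, smul_smul, smul_smul]
  congr 2 <;> field_simp <;> ring
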